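/- Suppose that ran N_C + Σ_{i∈I} ω_i L_i*(ran F_i) = H, where ran N_C = ⋃_{x∈C} N_C x, ran F_i = {F_i y : y ∈ G_i}, and the sum is the Minkowski sum of the sets {Σ_{i∈I} ω_i L_i* v_i : v_i ∈ ran F_i} with ran N_C. Then the relaxed problem has a solution: there exists x ∈ C such that Σ_{i∈I} ω_i ⟪L_i(y − x), F_i(L_i x) − p_i⟫ ≥ 0 for every y ∈ C. -/

import Mathlib

open RealInnerProductSpace Pointwise

/-- The normal cone to a set `C` at `x`: the usual normal cone when `x ∈ C`, and `∅`
otherwise. -/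
def normalCone {H : Type*} [NormedAddCommGroup H] [InnerProductSpace ℝ H]
    (C : Set H) : H → Set H :=
  fun z => {u : H | z ∈ C ∧ ∀ y ∈ C, ⟪y - z, u⟫ ≤ 0}

/-!
With `B x = Σᵢ ωᵢ Lᵢ* (Fᵢ (Lᵢ x) - pᵢ)` the problem is the variational inequality
`0 ≤ ⟪y - x, B x⟫` on `C`. The operator `B` is monotone and Lipschitz, so for `ε > 0` the
strongly monotone operator `ε • id + B` has a solution `x_ε`: a fixed point of the contraction
`x ↦ P_C (x - γ (ε x + B x))`.

Firmly nonexpansive maps are rectangular: `⟪a - b, F u - F a⟫ ≤ ‖u - b‖² / 4`. The range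
condition writes every `w` as `a + Σᵢ ωᵢ Lᵢ* (Fᵢ uᵢ - pᵢ)` with `a ∈ N_C z`, and rectangularity
then bounds `⟪x_ε, w⟫` uniformly in `ε ≤ 1`; by Banach–Steinhaus the `x_ε` are bounded.
Monotonicity of `B` gives `⟪x_ε - x_δ, ε x_ε - δ x_δ⟫ ≤ 0`, hence `‖x_ε - x_δ‖² ≤ ‖x_δ‖² - ‖x_ε‖²`
for `δ ≤ ε`. So `‖x_ε‖` increases as `ε ↓ 0`, the bounded family `x_ε` is Cauchy, and its limit
solves the problem.
-/

open Filter Topology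
open scoped NNReal

theorem cauchySeq_of_norm_sub_sq_le {E : Type*} [SeminormedAddCommGroup E] {x : ℕ → E} {M : ℝ}
    (hM : ∀ n, ‖x n‖ ≤ M) (h : ∀ n m, n ≤ m → ‖x n - x m‖ ^ 2 ≤ ‖x m‖ ^ 2 - ‖x n‖ ^ 2) :
    CauchySeq x := by
  have hmono : Monotone fun n => ‖x n‖ ^ 2 := fun n m hnm => by
    simpa using (sq_nonneg _).trans (h n m hnm)
  have hbdd : BddAbove (Set.range fun n => ‖x n‖ ^ 2) :=
    ⟨M ^ 2, Set.forall_mem_range.2 fun n => pow_le_pow_left₀ (norm_nonneg _) (hM n) 2⟩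
  have hcauchy := (tendsto_atTop_ciSup hmono hbdd).cauchySeq
  refine Metric.cauchySeq_iff'.2 fun r hr => ?_
  obtain ⟨N, hN⟩ := Metric.cauchySeq_iff'.1 hcauchy (r ^ 2) (by positivity)
  refine ⟨N, fun n hn => ?_⟩
  have hsq : dist (x n) (x N) ^ 2 < r ^ 2 := by
    rw [dist_comm, dist_eq_norm]
    exact (h N n hn).trans_lt ((le_abs_self _).trans_lt (hN n hn))
  exact lt_of_pow_lt_pow_left₀ 2 hr.le hsq

section Hilbert

variable {H : Type*} [NormedAddCommGroup H] [InnerProductSpace ℝ H]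

def FirmlyNonexpansive (F : H → H) : Prop :=
  ∀ u v, ‖F u - F v‖ ^ 2 ≤ ⟪u - v, F u - F v⟫

theorem firmlyNonexpansive_id : FirmlyNonexpansive (id : H → H) := fun u v => by
  rw [id, id, real_inner_self_eq_norm_sq]

namespace FirmlyNonexpansive

variable {F : H → H}

theorem sub_const (hF : FirmlyNonexpansive F) (p : H) : FirmlyNonexpansive fun u => F u - p :=
  fun u v => by simpa only [sub_sub_sub_cancel_right] using hF u v

theorem inner_sub_nonneg (hF : FirmlyNonexpansive F) (u v : H) : 0 ≤ ⟪u - v, F u - F v⟫ :=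
  (sq_nonneg _).trans (hF u v)

theorem lipschitzWith_one (hF : FirmlyNonexpansive F) : LipschitzWith 1 F := by
  refine lipschitzWith_iff_norm_sub_le.2 fun u v => ?_
  rw [NNReal.coe_one, one_mul]
  have h := (hF u v).trans (real_inner_le_norm _ _)
  nlinarith [norm_nonneg (F u - F v), norm_nonneg (u - v)]

theorem inner_sub_le (hF : FirmlyNonexpansive F) (a b u : H) :
    ⟪a - b, F u - F a⟫ ≤ ‖u - b‖ ^ 2 / 4 := by
  have hsplit : a - b = (u - b) - (u - a) := by abel
  rw [hsplit, inner_sub_left]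
  have := hF u a
  have := real_inner_le_norm (u - b) (F u - F a)
  nlinarith [sq_nonneg (‖F u - F a‖ - ‖u - b‖ / 2)]

end FirmlyNonexpansive

theorem exists_firmlyNonexpansive_proj [CompleteSpace H] {C : Set H} (hne : C.Nonempty)
    (hcl : IsClosed C) (hcv : Convex ℝ C) :
    ∃ P : H → H, FirmlyNonexpansive P ∧ ∀ u, P u ∈ C ∧ ∀ w ∈ C, ⟪u - P u, w - P u⟫ ≤ 0 := by
  have hproj (u : H) : ∃ z ∈ C, ∀ w ∈ C, ⟪u - z, w - z⟫ ≤ 0 := by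
    obtain ⟨z, hz, hmin⟩ := exists_norm_eq_iInf_of_complete_convex hne hcl.isComplete hcv u
    exact ⟨z, hz, (norm_eq_iInf_iff_real_inner_le_zero hcv hz).1 hmin⟩
  choose P hPC hP using hproj
  refine ⟨P, fun u v => ?_, fun u => ⟨hPC u, hP u⟩⟩
  have hu := hP u (P v) (hPC v)
  have hv := hP v (P u) (hPC u)
  have : ⟪u - v, P u - P v⟫ - ‖P u - P v‖ ^ 2 =
      -⟪u - P u, P v - P u⟫ - ⟪v - P v, P u - P v⟫ := by
    rw [← real_inner_self_eq_norm_sq]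
    simp only [inner_sub_left, inner_sub_right, real_inner_comm]
    ring
  linarith

def IsVISolution (C : Set H) (A : H → H) (x : H) : Prop :=
  x ∈ C ∧ ∀ y ∈ C, 0 ≤ ⟪y - x, A x⟫

theorem exists_lipschitzWith_sub_smul_lt_one {A : H → H} {ε : ℝ} (hε : 0 < ε)
    (hA : ∀ u v, ε * ‖u - v‖ ^ 2 ≤ ⟪u - v, A u - A v⟫) {K : ℝ≥0} (hAK : LipschitzWith K A) :
    ∃ γ : ℝ, 0 < γ ∧ ∃ κ : ℝ≥0, κ < 1 ∧ LipschitzWith κ fun u => u - γ • A u := by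
  -- the step `γ` is chosen so that `γ K² ≤ ε` and `0 < γ ε ≤ 1`
  set γ : ℝ := ε / (K ^ 2 + ε ^ 2)
  have hγ : 0 < γ := by positivity
  have hγK : γ * K ^ 2 + γ * ε * ε = ε := by
    simp only [γ]; field_simp
  have hγε : γ * ε ≤ 1 := by nlinarith
  refine ⟨γ, hγ, (√(1 - γ * ε)).toNNReal, ?_,
    lipschitzWith_iff_norm_sub_le.2 fun u v => ?_⟩
  · rw [Real.toNNReal_lt_one, Real.sqrt_lt' one_pos]
    nlinarith
  · have hmono := hA u v
    have hlip := hAK.norm_sub_le u v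
    have hsq : ‖(u - γ • A u) - (v - γ • A v)‖ ^ 2 ≤ (1 - γ * ε) * ‖u - v‖ ^ 2 := by
      rw [show (u - γ • A u) - (v - γ • A v) = (u - v) - γ • (A u - A v) by
        rw [smul_sub]; abel, norm_sub_sq_real, real_inner_smul_right, norm_smul,
        Real.norm_of_nonneg hγ.le]
      have : ‖A u - A v‖ ^ 2 ≤ K ^ 2 * ‖u - v‖ ^ 2 := by
        rw [← mul_pow]; gcongr
      have h1 := mul_le_mul_of_nonneg_left hmono hγ.le
      have h2 := mul_le_mul_of_nonneg_left this (sq_nonneg γ)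
      have h3 : γ ^ 2 * (K ^ 2 * ‖u - v‖ ^ 2) =
          γ * ε * ‖u - v‖ ^ 2 - (γ * ε * ‖u - v‖) ^ 2 := by
        linear_combination (γ * ‖u - v‖ ^ 2) * hγK
      nlinarith [sq_nonneg (γ * ε * ‖u - v‖)]
    rw [Real.coe_toNNReal _ (Real.sqrt_nonneg _), ← Real.sqrt_sq (norm_nonneg (u - v)),
      ← Real.sqrt_mul (by linarith)]
    exact Real.le_sqrt_of_sq_le hsq

theorem exists_isVISolution_of_strongly_monotone [CompleteSpace H] {C : Set H}
    (hne : C.Nonempty) (hcl : IsClosed C) (hcv : Convex ℝ C) {A : H → H} {ε : ℝ} (hε : 0 < ε)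
    (hA : ∀ u v, ε * ‖u - v‖ ^ 2 ≤ ⟪u - v, A u - A v⟫) {K : ℝ≥0} (hAK : LipschitzWith K A) :
    ∃ x, IsVISolution C A x := by
  obtain ⟨P, hPfne, hP⟩ := exists_firmlyNonexpansive_proj hne hcl hcv
  obtain ⟨γ, hγ, κ, hκ, hstep⟩ := exists_lipschitzWith_sub_smul_lt_one hε hA hAK
  have hT : ContractingWith κ (P ∘ fun u => u - γ • A u) :=
    ⟨hκ, by simpa using hPfne.lipschitzWith_one.comp hstep⟩
  obtain ⟨x, hx, -⟩ := hT.exists_fixedPoint 0 (edist_ne_top _ _)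
  have hxP : P (x - γ • A x) = x := hx
  obtain ⟨hxC, hxproj⟩ := hP (x - γ • A x)
  rw [hxP] at hxC hxproj
  refine ⟨x, hxC, fun y hy => ?_⟩
  have := hxproj y hy
  rw [sub_sub_cancel_left, inner_neg_left, real_inner_smul_left, real_inner_comm] at this
  exact nonneg_of_mul_nonneg_right (by linarith) hγ

theorem inner_smul_add_sub_smul_add_ge {B : H → H} (hB : ∀ u v, 0 ≤ ⟪u - v, B u - B v⟫)
    (ε : ℝ) (u v : H) : ε * ‖u - v‖ ^ 2 ≤ ⟪u - v, (ε • u + B u) - (ε • v + B v)⟫ := by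
  rw [add_sub_add_comm, ← smul_sub, inner_add_right, real_inner_smul_right,
    real_inner_self_eq_norm_sq]
  linarith [hB u v]

theorem inner_sub_smul_sub_smul_nonpos {C : Set H} {B : H → H}
    (hB : ∀ u v, 0 ≤ ⟪u - v, B u - B v⟫) {ε ε' : ℝ} {x x' : H}
    (hx : IsVISolution C (fun y => ε • y + B y) x)
    (hx' : IsVISolution C (fun y => ε' • y + B y) x') :
    ⟪x - x', ε • x - ε' • x'⟫ ≤ 0 := by
  have h := hx.2 x' hx'.1
  have h' := hx'.2 x hx.1
  have hmono := hB x x'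
  rw [← neg_sub, inner_neg_left, inner_add_right] at h
  rw [inner_add_right] at h'
  rw [inner_sub_right] at hmono ⊢
  linarith

theorem norm_sub_sq_le_of_inner_smul_sub_smul_nonpos {ε ε' : ℝ} (hε' : 0 < ε') (hεε' : ε' ≤ ε)
    {x x' : H} (h : ⟪x - x', ε • x - ε' • x'⟫ ≤ 0) : ‖x - x'‖ ^ 2 ≤ ‖x'‖ ^ 2 - ‖x‖ ^ 2 := by
  rw [inner_sub_left, inner_sub_right, inner_sub_right, real_inner_smul_right,
    real_inner_smul_right, real_inner_smul_right, real_inner_smul_right,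
    real_inner_self_eq_norm_sq, real_inner_self_eq_norm_sq, real_inner_comm x] at h
  have hcs := real_inner_le_norm x x'
  have hcs' := mul_le_mul_of_nonneg_left hcs (by linarith : 0 ≤ ε + ε')
  have hle : ‖x‖ ≤ ‖x'‖ := by
    by_contra! hlt
    nlinarith [mul_pos hε' (mul_pos (sub_pos.2 hlt) (sub_pos.2 hlt)),
      mul_nonneg (mul_nonneg (sub_nonneg.2 hεε') (norm_nonneg x)) (sub_pos.2 hlt).le]
  have hsq : ‖x‖ ^ 2 ≤ ‖x'‖ ^ 2 := pow_le_pow_left₀ (norm_nonneg _) hle 2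
  have hinner : ‖x‖ ^ 2 ≤ ⟪x, x'⟫ := by
    nlinarith [mul_le_mul_of_nonneg_left hsq hε'.le]
  rw [norm_sub_sq_real]
  linarith

theorem IsVISolution.of_tendsto {C : Set H} (hC : IsClosed C) {A : ℕ → H → H} {B : H → H}
    {x : ℕ → H} {x₀ : H} (hsol : ∀ n, IsVISolution C (A n) (x n))
    (hx : Tendsto x atTop (𝓝 x₀)) (hA : Tendsto (fun n => A n (x n)) atTop (𝓝 (B x₀))) :
    IsVISolution C B x₀ :=
  ⟨hC.mem_of_tendsto hx (.of_forall fun n => (hsol n).1), fun y hy =>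
    ge_of_tendsto ((tendsto_const_nhds.sub hx).inner hA) (.of_forall fun n => (hsol n).2 y hy)⟩

theorem exists_isVISolution_of_bounded_regularized [CompleteSpace H] {C : Set H}
    (hC : IsClosed C) {B : H → H} (hB : ∀ u v, 0 ≤ ⟪u - v, B u - B v⟫) (hBc : Continuous B)
    {e : ℕ → ℝ} (he : Antitone e) (he0 : ∀ n, 0 < e n) (hlim : Tendsto e atTop (𝓝 0))
    {x : ℕ → H} (hx : ∀ n, IsVISolution C (fun y => e n • y + B y) (x n)) {M : ℝ}
    (hM : ∀ n, ‖x n‖ ≤ M) : ∃ x₀, IsVISolution C B x₀ := by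
  have hstep (n m : ℕ) (hnm : n ≤ m) : ‖x n - x m‖ ^ 2 ≤ ‖x m‖ ^ 2 - ‖x n‖ ^ 2 :=
    norm_sub_sq_le_of_inner_smul_sub_smul_nonpos (he0 m) (he hnm)
      (inner_sub_smul_sub_smul_nonpos hB (hx n) (hx m))
  obtain ⟨x₀, hx₀⟩ := cauchySeq_tendsto_of_complete (cauchySeq_of_norm_sub_sq_le hM hstep)
  refine ⟨x₀, IsVISolution.of_tendsto hC hx hx₀ ?_⟩
  simpa using (hlim.smul hx₀).add (hBc.tendsto x₀ |>.comp hx₀)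

theorem exists_norm_le_of_forall_exists_inner_le [CompleteSpace H] {ι : Type*} {x : ι → H}
    (h : ∀ w, ∃ c, ∀ n, ⟪x n, w⟫ ≤ c) : ∃ M, ∀ n, ‖x n‖ ≤ M := by
  have habs (w : H) : ∃ c, ∀ n, ‖innerSL ℝ (x n) w‖ ≤ c := by
    obtain ⟨c, hc⟩ := h w
    obtain ⟨c', hc'⟩ := h (-w)
    refine ⟨max c c', fun n => abs_le.2 ⟨?_, (hc n).trans (le_max_left _ _)⟩⟩
    have := hc' n
    rw [inner_neg_right] at this
    simp only [innerSL_apply_apply]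
    linarith [le_max_right c c']
  simpa only [innerSL_apply_norm] using banach_steinhaus habs

end Hilbert

section RelaxedOperator

variable {H : Type*} [NormedAddCommGroup H] [InnerProductSpace ℝ H] [CompleteSpace H]
  {I : Type*} [Fintype I] {G : I → Type*} [∀ i, NormedAddCommGroup (G i)]
  [∀ i, InnerProductSpace ℝ (G i)] [∀ i, CompleteSpace (G i)]
  (ω : I → ℝ) (L : ∀ i, H →L[ℝ] G i)

noncomputable def weightedAdjointSum : (∀ i, G i) →L[ℝ] H :=
  ∑ i, ω i • (ContinuousLinearMap.adjoint (L i)).comp (ContinuousLinearMap.proj i)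

theorem weightedAdjointSum_apply (v : ∀ i, G i) :
    weightedAdjointSum ω L v = ∑ i, ω i • ContinuousLinearMap.adjoint (L i) (v i) := by
  simp [weightedAdjointSum]

theorem inner_weightedAdjointSum (y : H) (v : ∀ i, G i) :
    ⟪y, weightedAdjointSum ω L v⟫ = ∑ i, ω i * ⟪L i y, v i⟫ := by
  simp [weightedAdjointSum_apply, inner_sum, real_inner_smul_right,
    ContinuousLinearMap.adjoint_inner_right]

noncomputable def relaxedOperator (F : ∀ i, G i → G i) (x : H) : H :=
  weightedAdjointSum ω L fun i => F i (L i x)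

variable {ω L} {F : ∀ i, G i → G i}

theorem inner_sub_relaxedOperator_nonneg (hω : ∀ i, 0 ≤ ω i)
    (hF : ∀ i, FirmlyNonexpansive (F i)) (u v : H) :
    0 ≤ ⟪u - v, relaxedOperator ω L F u - relaxedOperator ω L F v⟫ := by
  rw [relaxedOperator, relaxedOperator, ← map_sub, inner_weightedAdjointSum]
  refine Finset.sum_nonneg fun i _ => mul_nonneg (hω i) ?_
  simpa only [map_sub, Pi.sub_apply] using (hF i).inner_sub_nonneg (L i u) (L i v)

theorem lipschitzWith_relaxedOperator (hF : ∀ i, LipschitzWith 1 (F i)) :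
    LipschitzWith (‖weightedAdjointSum ω L‖₊ * ∑ i, ‖L i‖₊) (relaxedOperator ω L F) := by
  refine (weightedAdjointSum ω L).lipschitz.comp (LipschitzWith.of_dist_le_mul fun x y => ?_)
  refine (dist_pi_le_iff (by positivity)).2 fun i => ?_
  calc dist (F i (L i x)) (F i (L i y)) ≤ ‖L i‖₊ * dist x y := by
        simpa using ((hF i).comp (L i).lipschitz).dist_le_mul x y
    _ ≤ (∑ j, ‖L j‖₊ : ℝ≥0) * dist x y := by
        gcongr
        exact_mod_cast Finset.single_le_sum (f := fun j => ‖L j‖₊) (fun _ _ => zero_le)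
          (Finset.mem_univ i)

theorem inner_sub_le_of_isVISolution_regularized (hω : ∀ i, 0 ≤ ω i)
    (hF : ∀ i, FirmlyNonexpansive (F i)) {C : Set H} {z a : H} (ha : a ∈ normalCone C z)
    (u : ∀ i, G i) {ε : ℝ} (hε0 : 0 ≤ ε) (hε1 : ε ≤ 1) {x : H}
    (hx : IsVISolution C (fun y => ε • y + relaxedOperator ω L F y) x) :
    ⟪x - z, a + weightedAdjointSum ω L fun i => F i (u i)⟫ ≤
      ∑ i, ω i * (‖u i - L i z‖ ^ 2 / 4) + ‖z‖ ^ 2 / 4 := by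
  have hcone : ⟪x - z, a⟫ ≤ 0 := ha.2 x hx.1
  have hrect :
      ⟪x - z, (weightedAdjointSum ω L fun i => F i (u i)) - relaxedOperator ω L F x⟫ ≤
        ∑ i, ω i * (‖u i - L i z‖ ^ 2 / 4) := by
    rw [relaxedOperator, ← map_sub, inner_weightedAdjointSum]
    refine Finset.sum_le_sum fun i _ => mul_le_mul_of_nonneg_left ?_ (hω i)
    simpa only [map_sub, Pi.sub_apply] using (hF i).inner_sub_le (L i x) (L i z) (u i)
  have hreg : ⟪x - z, relaxedOperator ω L F x⟫ ≤ ‖z‖ ^ 2 / 4 := by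
    have hvi := hx.2 z ha.1
    have hid := firmlyNonexpansive_id.inner_sub_le x z 0
    rw [← neg_sub, inner_neg_left, inner_add_right, real_inner_smul_right] at hvi
    simp only [id, zero_sub, inner_neg_right, norm_neg] at hid
    nlinarith [mul_le_mul_of_nonneg_left hid hε0, sq_nonneg ‖z‖]
  rw [inner_sub_right] at hrect
  rw [inner_add_right]
  linarith

theorem exists_norm_le_of_isVISolution_regularized (hω : ∀ i, 0 ≤ ω i)
    (hF : ∀ i, FirmlyNonexpansive (F i)) {C : Set H}
    (hdec : ∀ w, ∃ z a, a ∈ normalCone C z ∧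
      ∃ u : ∀ i, G i, w = a + weightedAdjointSum ω L fun i => F i (u i))
    {e : ℕ → ℝ} (he0 : ∀ n, 0 ≤ e n) (he1 : ∀ n, e n ≤ 1) {x : ℕ → H}
    (hx : ∀ n, IsVISolution C (fun y => e n • y + relaxedOperator ω L F y) (x n)) :
    ∃ M, ∀ n, ‖x n‖ ≤ M := by
  refine exists_norm_le_of_forall_exists_inner_le fun w => ?_
  obtain ⟨z, a, ha, u, rfl⟩ := hdec w
  refine ⟨∑ i, ω i * (‖u i - L i z‖ ^ 2 / 4) + ‖z‖ ^ 2 / 4 +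
    ⟪z, a + weightedAdjointSum ω L fun i => F i (u i)⟫, fun n => ?_⟩
  have := inner_sub_le_of_isVISolution_regularized hω hF ha u (he0 n) (he1 n) (hx n)
  rw [inner_sub_left] at this
  linarith

theorem exists_mem_normalCone_add_weightedAdjointSum_sub {C : Set H} (p : ∀ i, G i)
    (hrange : (⋃ x : H, normalCone C x)
        + {w : H | ∃ v : ∀ i, G i, (∀ i, v i ∈ Set.range (F i)) ∧
            w = ∑ i, ω i • (ContinuousLinearMap.adjoint (L i)) (v i)} = Set.univ) (w : H) :
    ∃ z a, a ∈ normalCone C z ∧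
      ∃ u : ∀ i, G i, w = a + weightedAdjointSum ω L fun i => F i (u i) - p i := by
  have hmem : w + weightedAdjointSum ω L p ∈ (⋃ x : H, normalCone C x)
      + {w : H | ∃ v : ∀ i, G i, (∀ i, v i ∈ Set.range (F i)) ∧
          w = ∑ i, ω i • (ContinuousLinearMap.adjoint (L i)) (v i)} := hrange ▸ trivial
  obtain ⟨a, ha, _, ⟨v, hv, rfl⟩, hsum⟩ := Set.mem_add.1 hmem
  obtain ⟨z, ha⟩ := Set.mem_iUnion.1 ha
  choose u hu using hv
  refine ⟨z, a, ha, u, ?_⟩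
  rw [show (fun i => F i (u i) - p i) = v - p from funext fun i => by simp [hu], map_sub,
    weightedAdjointSum_apply, ← add_sub_assoc, hsum, add_sub_cancel_right]

end RelaxedOperator

theorem relaxed_has_solution_of_range_eq_univ_general
    {H : Type*} [NormedAddCommGroup H] [InnerProductSpace ℝ H] [CompleteSpace H]
    {I : Type*} [Fintype I]
    (G : I → Type*) [∀ i, NormedAddCommGroup (G i)] [∀ i, InnerProductSpace ℝ (G i)]
    [∀ i, CompleteSpace (G i)]
    (ω : I → ℝ) (hω : ∀ i, ω i ∈ Set.Ioo (0 : ℝ) 1)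
    (C : Set H) (hCne : C.Nonempty) (hCcl : IsClosed C) (hCcv : Convex ℝ C)
    (p : ∀ i, G i) (L : ∀ i, H →L[ℝ] G i)
    (F : ∀ i, G i → G i)
    (hF : ∀ i, ∀ u v : G i, ⟪u - v, F i u - F i v⟫ ≥ ‖F i u - F i v‖ ^ 2)
    (hrange : (⋃ x : H, normalCone C x)
        + {w : H | ∃ v : ∀ i, G i, (∀ i, v i ∈ Set.range (F i)) ∧
            w = ∑ i, ω i • (ContinuousLinearMap.adjoint (L i)) (v i)} = Set.univ) :
    ∃ x ∈ C, ∀ y ∈ C, (∑ i, ω i * ⟪L i (y - x), F i (L i x) - p i⟫) ≥ 0 := by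
  set F' : ∀ i, G i → G i := fun i u => F i u - p i
  have hF' (i : I) : FirmlyNonexpansive (F' i) := FirmlyNonexpansive.sub_const (hF i) (p i)
  have hω0 (i : I) : 0 ≤ ω i := (hω i).1.le
  set B := relaxedOperator ω L F'
  have hBmono := inner_sub_relaxedOperator_nonneg (L := L) hω0 hF'
  have hBlip := lipschitzWith_relaxedOperator (ω := ω) (L := L) fun i => (hF' i).lipschitzWith_one
  set e : ℕ → ℝ := fun n => 1 / (n + 1)
  have he0 (n : ℕ) : 0 < e n := by positivity
  have he1 (n : ℕ) : e n ≤ 1 := div_le_one_of_le₀ (by simp) (by positivity)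
  have he : Antitone e := fun n m hnm => by simp only [e]; gcongr
  have hreg (n : ℕ) : ∃ x, IsVISolution C (fun y => e n • y + B y) x :=
    exists_isVISolution_of_strongly_monotone hCne hCcl hCcv (he0 n)
      (inner_smul_add_sub_smul_add_ge hBmono (e n)) ((lipschitzWith_smul (e n)).add hBlip)
  choose x hx using hreg
  obtain ⟨M, hM⟩ := exists_norm_le_of_isVISolution_regularized hω0 hF'
    (exists_mem_normalCone_add_weightedAdjointSum_sub p hrange) (fun n => (he0 n).le) he1 hx
  obtain ⟨x₀, hx₀C, hx₀⟩ := exists_isVISolution_of_bounded_regularized hCcl hBmono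
    hBlip.continuous he he0 tendsto_one_div_add_atTop_nhds_zero_nat hx hM
  refine ⟨x₀, hx₀C, fun y hy => ?_⟩
  rw [ge_iff_le, ← inner_weightedAdjointSum]
  exact hx₀ y hy

/-- If `ran N_C + Σᵢ ωᵢ Lᵢ*(ran Fᵢ) = H`, the relaxed variational inequality problem has
a solution. -/
theorem relaxed_has_solution_of_range_eq_univ
    {H : Type*} [NormedAddCommGroup H] [InnerProductSpace ℝ H] [CompleteSpace H]
    {I : Type*} [Fintype I] [Nonempty I]
    (G : I → Type*) [∀ i, NormedAddCommGroup (G i)] [∀ i, InnerProductSpace ℝ (G i)]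
    [∀ i, CompleteSpace (G i)]
    (ω : I → ℝ) (hω : ∀ i, ω i ∈ Set.Ioo (0 : ℝ) 1) (hωsum : ∑ i, ω i = 1)
    (C : Set H) (hCne : C.Nonempty) (hCcl : IsClosed C) (hCcv : Convex ℝ C)
    (p : ∀ i, G i) (L : ∀ i, H →L[ℝ] G i) (hL : ∀ i, L i ≠ 0)
    (F : ∀ i, G i → G i)
    (hF : ∀ i, ∀ u v : G i, ⟪u - v, F i u - F i v⟫ ≥ ‖F i u - F i v‖ ^ 2)
    (hrange : (⋃ x : H, normalCone C x)
        + {w : H | ∃ v : ∀ i, G i, (∀ i, v i ∈ Set.range (F i)) ∧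
            w = ∑ i, ω i • (ContinuousLinearMap.adjoint (L i)) (v i)} = Set.univ) :
    ∃ x ∈ C, ∀ y ∈ C, (∑ i, ω i * ⟪L i (y - x), F i (L i x) - p i⟫) ≥ 0 :=
  relaxed_has_solution_of_range_eq_univ_general G ω hω C hCne hCcl hCcv p L F hF hrange
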